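/- arXiv:1705.01972 — 4 statements merged into one kernel-verified Lean document; each statement's English description precedes it below -/
import Mathlib

section
/- Let k ≥ 1 and let a = (a_1, ..., a_k) be a nondecreasing sequence of integers with a_k ≤ 1 and a_1 ≤ −2, and set s = a_1 + ... + a_k. Then u(a) = Σ_{1 ≤ i < j ≤ k} max{a_j − a_i − 1, 0} satisfies u(a) ≥ s + k + 1; in particular u(a) > s + k. -/
/-- If `a` is a nondecreasing integer sequence of length `k ≥ 1` with all entries at
most `1` and first entry at most `-2`, then
`u(a) = ∑_{i<j} max (a j - a i - 1) 0 ≥ s + k + 1` where `s` is the sum of the entries. -/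
theorem stmt_2 (k : ℕ) (hk : 1 ≤ k) (a : Fin k → ℤ) (ha : Monotone a)
    (h1 : ∀ i, a i ≤ 1) (h2 : a ⟨0, hk⟩ ≤ -2) :
    (∑ i, a i) + (k : ℤ) + 1 ≤
      ∑ i : Fin k, ∑ j : Fin k, if i < j then max (a j - a i - 1) 0 else 0 := by
  set i₀ : Fin k := ⟨0, hk⟩ with hi₀
  have step1 : (∑ j : Fin k, if i₀ < j then max (a j - a i₀ - 1) 0 else 0) ≤
      ∑ i : Fin k, ∑ j : Fin k, if i < j then max (a j - a i - 1) 0 else 0 := by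
    apply Finset.single_le_sum
      (f := fun i => ∑ j : Fin k, if i < j then max (a j - a i - 1) 0 else 0)
    · intro i _
      apply Finset.sum_nonneg
      intro j _
      split
      · exact le_max_right _ _
      · exact le_refl 0
    · exact Finset.mem_univ i₀
  have step2 : (∑ j : Fin k, ((a j - a i₀ - 1) + if j = i₀ then 1 else 0)) ≤
      ∑ j : Fin k, if i₀ < j then max (a j - a i₀ - 1) 0 else 0 := by
    apply Finset.sum_le_sum
    intro j _
    by_cases hj : j = i₀
    · subst hj; simp
    · have hlt : i₀ < j := by
        rw [Fin.lt_def]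
        have h0 : j.val ≠ i₀.val := fun h => hj (Fin.ext h)
        simp only [hi₀] at h0 ⊢
        omega
      simp only [hlt, hj, if_true, if_false, add_zero]
      exact le_max_left _ _
  have step3 : (∑ j : Fin k, ((a j - a i₀ - 1) + if j = i₀ then 1 else 0)) =
      (∑ j, a j) - k * (a i₀ + 1) + 1 := by
    rw [Finset.sum_add_distrib, Finset.sum_ite_eq' Finset.univ i₀ (fun _ => (1:ℤ))]
    simp [Finset.sum_sub_distrib, sub_sub, mul_add]
  have hk' : (1:ℤ) ≤ (k:ℤ) := by exact_mod_cast hk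
  have := step2.trans step1
  rw [step3] at this
  nlinarith [this, h2, hk']
end

section
/- Let N ≥ 2, let d_1, ..., d_{N−1} be nonnegative integers, and let A be an N × (N−1) matrix over ℂ[x, y] whose entry A_{ij} is homogeneous of degree d_j. Suppose that for every (x_0, y_0) ∈ ℂ² ∖ {0} the complex matrix A(x_0, y_0) has rank N−1. For 1 ≤ i ≤ N set m_i = (−1)^i · det(A with its i-th row deleted). Then: (a) Σ_{i=1}^{N} m_i A_{ij} = 0 for every column index j; (b) the polynomials m_1, ..., m_N have no common zero in ℂ² ∖ {0}; and (c) every vector v ∈ ℂ[x, y]^N satisfying Σ_{i=1}^{N} v_i m_i = 0 lies in the column span of A over ℂ[x, y], i.e., v = A·u for some u ∈ ℂ[x, y]^{N−1}. -/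
/-!
Laplace expansion of `det [w | A]` along its first column is `∑ wᵢ mᵢ`. Taking for `w` a column
of `A` gives (a); at a point `p ≠ 0`, taking `w` outside the column span of `A(p)` (which has
dimension `n`) gives (b).

For (c), the matrix `[v | A]` is singular, so `[v | A] * adj [v | A] = 0`; column `k` of this
identity is `A Uₖ = mₖ v` for an explicit `Uₖ`. Some `mₖ` is nonzero, so `A` is injective and
`mₗ Uₖ = mₖ Uₗ`. Hence `mₖ` divides `r Uₖ` for every `r` in the ideal `(m₀, …, mₙ)`. By (b) and
the Nullstellensatz this ideal contains a power of `X 0` and a power of `X 1`, which are coprime,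
so `mₖ ∣ Uₖ` and `u = Uₖ / mₖ` solves `A u = v`.
-/

open MvPolynomial

lemma IsRelPrime.dvd_of_dvd_mul_of_dvd_mul {α : Type*} [CommMonoidWithZero α]
    [IsCancelMulZero α] [DecompositionMonoid α] {g x y t : α} (hxy : IsRelPrime x y)
    (hx : g ∣ x * t) (hy : g ∣ y * t) : g ∣ t := by
  obtain ⟨g₁, g₂, hg₁, ⟨t', rfl⟩, rfl⟩ := exists_dvd_and_dvd_of_dvd_mul hx
  rcases eq_or_ne g₂ 0 with rfl | hg₂
  · simp
  have hy' : g₁ ∣ y * t' := by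
    rw [mul_left_comm, mul_comm g₁] at hy
    exact (mul_dvd_mul_iff_left hg₂).mp hy
  rw [mul_comm g₁]
  exact mul_dvd_mul_left g₂ ((hxy.of_dvd_left hg₁).dvd_of_dvd_mul_left hy')

lemma Ideal.dvd_mul_of_mem_span_range {ι R : Type*} [Fintype ι] [CommSemiring R] {f : ι → R}
    {a t r : R} (h : ∀ k, a ∣ f k * t) (hr : r ∈ Ideal.span (Set.range f)) : a ∣ r * t := by
  obtain ⟨c, rfl⟩ := Ideal.mem_span_range_iff_exists_fun.mp hr
  rw [Finset.sum_mul]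
  exact Finset.dvd_sum fun k _ => by rw [mul_assoc]; exact dvd_mul_of_dvd_right (h k) _

lemma MvPolynomial.isRelPrime_X_X {σ R : Type*} [CommRing R] [IsDomain R] {s t : σ}
    (hst : s ≠ t) : IsRelPrime (X s : MvPolynomial σ R) (X t) :=
  X_prime.irreducible.isRelPrime_iff_not_dvd.mpr (X_dvd_X.not.mpr hst)

lemma MvPolynomial.X_mem_radical_span_of_eval_ne_zero {σ K ι : Type*} [Field K] [IsAlgClosed K]
    [Finite σ] (f : ι → MvPolynomial σ K) (hf : ∀ p : σ → K, p ≠ 0 → ∃ i, eval p (f i) ≠ 0)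
    (s : σ) : X s ∈ (Ideal.span (Set.range f)).radical := by
  rw [← vanishingIdeal_zeroLocus_eq_radical (K := K), mem_vanishingIdeal_iff]
  intro p hp
  rcases eq_or_ne p 0 with rfl | hp0
  · simp
  obtain ⟨i, hi⟩ := hf p hp0
  exact absurd (by simpa using hp (f i) (Ideal.subset_span ⟨i, rfl⟩)) hi

namespace Matrix

variable {α R : Type*} {n : ℕ}

def consCol (w : Fin (n + 1) → α) (A : Matrix (Fin (n + 1)) (Fin n) α) :
    Matrix (Fin (n + 1)) (Fin (n + 1)) α :=
  of fun i => Fin.cons (w i) (A i)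

@[simp]
lemma consCol_apply_zero (w : Fin (n + 1) → α) (A : Matrix (Fin (n + 1)) (Fin n) α) (i) :
    consCol w A i 0 = w i :=
  rfl

@[simp]
lemma consCol_apply_succ (w : Fin (n + 1) → α) (A : Matrix (Fin (n + 1)) (Fin n) α) (i)
    (j : Fin n) : consCol w A i j.succ = A i j :=
  rfl

lemma transpose_consCol (w : Fin (n + 1) → α) (A : Matrix (Fin (n + 1)) (Fin n) α) :
    (consCol w A)ᵀ = Fin.cons w Aᵀ := by
  ext j i
  exact Fin.cases rfl (fun _ => rfl) j

section CommRing

variable [CommRing R]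

def signedMinor (A : Matrix (Fin (n + 1)) (Fin n) R) (i : Fin (n + 1)) : R :=
  (-1) ^ (i : ℕ) * (A.submatrix i.succAbove id).det

variable (w : Fin (n + 1) → R) (A : Matrix (Fin (n + 1)) (Fin n) R)

lemma det_consCol : (consCol w A).det = ∑ i, w i * signedMinor A i := by
  rw [det_succ_column_zero]
  refine Finset.sum_congr rfl fun i _ => ?_
  rw [signedMinor, mul_left_comm, mul_assoc]
  rfl

lemma sum_signedMinor_mul_eq_zero (j : Fin n) : ∑ i, signedMinor A i * A i j = 0 := by
  have : (consCol (A · j) A).det = 0 :=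
    det_zero_of_column_eq (Fin.succ_ne_zero j).symm fun _ => rfl
  simpa only [det_consCol, mul_comm] using this

lemma signedMinor_map {S : Type*} [CommRing S] (f : R →+* S) (i : Fin (n + 1)) :
    signedMinor (A.map f) i = f (signedMinor A i) := by
  simp [signedMinor, RingHom.map_det, submatrix_map]

lemma adjugate_consCol_zero (k : Fin (n + 1)) :
    (consCol w A).adjugate 0 k = signedMinor A k := by
  rw [adjugate_fin_succ_eq_det_submatrix, Fin.val_zero, add_zero, Fin.succAbove_zero]
  rfl

lemma exists_mulVec_eq_signedMinor_smul (hw : ∑ i, w i * signedMinor A i = 0)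
    (k : Fin (n + 1)) : ∃ u, A *ᵥ u = signedMinor A k • w := by
  -- column `k` of `[w | A] * adj [w | A] = det [w | A] • 1 = 0`
  refine ⟨fun j => -(consCol w A).adjugate j.succ k, funext fun i => ?_⟩
  have h := congrFun₂ (mul_adjugate (consCol w A)) i k
  rw [det_consCol, hw, zero_smul, mul_apply, Fin.sum_univ_succ, adjugate_consCol_zero] at h
  simp only [consCol_apply_zero, consCol_apply_succ, zero_apply] at h
  simp only [mulVec, dotProduct, mul_neg, Finset.sum_neg_distrib, Pi.smul_apply, smul_eq_mul]
  linear_combination -h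

end CommRing

lemma signedMinor_ne_zero_of_rank_eq {K : Type*} [Field K] (A : Matrix (Fin (n + 1)) (Fin n) K)
    (hA : A.rank = n) : signedMinor A ≠ 0 := by
  have hcols : LinearIndependent K A.col := by
    rw [linearIndependent_iff_card_eq_finrank_span, Fintype.card_fin, Set.finrank,
      ← rank_eq_finrank_span_cols, hA]
  obtain ⟨w, hw⟩ : ∃ w, w ∉ Submodule.span K (Set.range A.col) := by
    by_contra! h
    have := A.rank_eq_finrank_span_cols
    rw [Submodule.eq_top_iff'.mpr h, finrank_top, Module.finrank_fin_fun] at this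
    omega
  have hunit : IsUnit (consCol w A) := by
    rw [← linearIndependent_cols_iff_isUnit, col, transpose_consCol]
    exact linearIndependent_finCons.mpr ⟨hcols, hw⟩
  intro h
  rw [isUnit_iff_isUnit_det, det_consCol, h] at hunit
  simp at hunit

section IsDomain

variable [CommRing R] [IsDomain R] (A : Matrix (Fin (n + 1)) (Fin n) R)

lemma mulVec_injective_of_signedMinor_ne_zero (h : signedMinor A ≠ 0) :
    Function.Injective A.mulVec := by
  obtain ⟨k, hk⟩ := Function.ne_iff.mp h
  have hdet : (A.submatrix k.succAbove id).det ≠ 0 := right_ne_zero_of_mul hk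
  intro c c' hcc'
  by_contra hne
  refine hdet (exists_mulVec_eq_zero_iff.mp ⟨c - c', sub_ne_zero.mpr hne, ?_⟩)
  have : A *ᵥ (c - c') = 0 := by rw [mulVec_sub, hcc', sub_self]
  exact funext fun i => congrFun this (k.succAbove i)

theorem exists_mulVec_eq_of_sum_mul_signedMinor_eq_zero [DecompositionMonoid R] {x y : R}
    (hx : x ∈ Ideal.span (Set.range (signedMinor A)))
    (hy : y ∈ Ideal.span (Set.range (signedMinor A))) (hxy : IsRelPrime x y)
    {v : Fin (n + 1) → R} (hv : ∑ i, v i * signedMinor A i = 0) : ∃ u, A *ᵥ u = v := by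
  set m := signedMinor A
  have hm : m ≠ 0 := by
    intro hm0
    have hspan : ∀ r ∈ Ideal.span (Set.range m), r = 0 := fun r hr => by
      obtain ⟨c, rfl⟩ := Ideal.mem_span_range_iff_exists_fun.mp hr
      simp [hm0]
    exact not_isRelPrime_zero_zero (hspan x hx ▸ hspan y hy ▸ hxy)
  obtain ⟨k, hk⟩ := Function.ne_iff.mp hm
  choose U hU using exists_mulVec_eq_signedMinor_smul v A hv
  have hcross (l : Fin (n + 1)) : m l • U k = m k • U l :=
    mulVec_injective_of_signedMinor_ne_zero A hm <| by
      rw [mulVec_smul, mulVec_smul, hU, hU, smul_smul, smul_smul, mul_comm]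
  have hdvd (j : Fin n) : m k ∣ U k j :=
    have h (l : Fin (n + 1)) : m k ∣ m l * U k j := ⟨U l j, congrFun (hcross l) j⟩
    hxy.dvd_of_dvd_mul_of_dvd_mul (Ideal.dvd_mul_of_mem_span_range h hx)
      (Ideal.dvd_mul_of_mem_span_range h hy)
  choose u hu using hdvd
  refine ⟨u, smul_right_injective _ hk ?_⟩
  change m k • (A *ᵥ u) = m k • v
  rw [← mulVec_smul, ← hU k]
  exact congrArg _ (funext fun j => (hu j).symm)

end IsDomain

end Matrix

open Matrix

theorem stmt_11_general (n : ℕ)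
    (A : Matrix (Fin (n + 1)) (Fin n) (MvPolynomial (Fin 2) ℂ))
    (hrank : ∀ p : Fin 2 → ℂ, p ≠ 0 → (A.map (eval p)).rank = n)
    (m : Fin (n + 1) → MvPolynomial (Fin 2) ℂ)
    (hm : ∀ i, m i = (-1) ^ (i : ℕ) * (A.submatrix i.succAbove id).det) :
    (∀ j, ∑ i, m i * A i j = 0) ∧
    (∀ p : Fin 2 → ℂ, p ≠ 0 → ∃ i, eval p (m i) ≠ 0) ∧
    (∀ v : Fin (n + 1) → MvPolynomial (Fin 2) ℂ, (∑ i, v i * m i) = 0 →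
      ∃ u : Fin n → MvPolynomial (Fin 2) ℂ, ∀ i, v i = ∑ j, A i j * u j) := by
  obtain rfl : m = signedMinor A := funext hm
  have hzero (p : Fin 2 → ℂ) (hp : p ≠ 0) : ∃ i, eval p (signedMinor A i) ≠ 0 := by
    obtain ⟨i, hi⟩ := Function.ne_iff.mp (signedMinor_ne_zero_of_rank_eq _ (hrank p hp))
    exact ⟨i, by rwa [signedMinor_map] at hi⟩
  refine ⟨sum_signedMinor_mul_eq_zero A, hzero, fun v hv => ?_⟩
  obtain ⟨a, ha⟩ := Ideal.mem_radical_iff.mp (X_mem_radical_span_of_eval_ne_zero _ hzero 0)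
  obtain ⟨b, hb⟩ := Ideal.mem_radical_iff.mp (X_mem_radical_span_of_eval_ne_zero _ hzero 1)
  have hrel : IsRelPrime (X 0 ^ a : MvPolynomial (Fin 2) ℂ) (X 1 ^ b) :=
    (isRelPrime_X_X (by decide)).pow
  obtain ⟨u, rfl⟩ := exists_mulVec_eq_of_sum_mul_signedMinor_eq_zero A ha hb hrel hv
  exact ⟨u, fun i => rfl⟩

/-- Let `A` be an `(n+1) × n` matrix of binary forms over `ℂ` (entries of column `j`
homogeneous of degree `d j`) which has full rank `n` at every point of `ℂ² \ {0}`, and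
let `m i = (-1)^i` times the determinant of `A` with row `i` deleted. Then the `m i`
give a relation among the rows of `A`, have no common zero in `ℂ² \ {0}`, and every
polynomial relation among the `m i` comes from the columns of `A`. -/
theorem stmt_11 (n : ℕ) (hn : 1 ≤ n) (d : Fin n → ℕ)
    (A : Matrix (Fin (n + 1)) (Fin n) (MvPolynomial (Fin 2) ℂ))
    (hA : ∀ i j, (A i j).IsHomogeneous (d j))
    (hrank : ∀ p : Fin 2 → ℂ, p ≠ 0 → (A.map (eval p)).rank = n)
    (m : Fin (n + 1) → MvPolynomial (Fin 2) ℂ)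
    (hm : ∀ i, m i = (-1) ^ (i : ℕ) * (A.submatrix i.succAbove id).det) :
    (∀ j, ∑ i, m i * A i j = 0) ∧
    (∀ p : Fin 2 → ℂ, p ≠ 0 → ∃ i, eval p (m i) ≠ 0) ∧
    (∀ v : Fin (n + 1) → MvPolynomial (Fin 2) ℂ, (∑ i, v i * m i) = 0 →
      ∃ u : Fin n → MvPolynomial (Fin 2) ℂ, ∀ i, v i = ∑ j, A i j * u j) :=
  stmt_11_general n A hrank m hm
end

section
/- Let W ⊆ ℂ⁵ be a 2-dimensional linear subspace such that v_0⁴ + v_1⁴ + v_2⁴ + v_3⁴ + v_4⁴ = 0 for every vector v = (v_0, v_1, v_2, v_3, v_4) ∈ W. Then there exist distinct indices i, j ∈ {0, 1, 2, 3, 4} and ζ ∈ ℂ with ζ⁴ = −1 such that w_i = ζ·w_j for every w ∈ W. -/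
/-!
Write every vector of `W` as `s • u + t • v`, with `v` chosen so that `vᵢ = 0` forces `uᵢ = 0`.
On the coordinates `i` with `vᵢ ≠ 0` put `xᵢ = uᵢ / vᵢ`; the hypothesis says that
`∑ᵢ vᵢ⁴ (t + xᵢ)⁴ = 0` for all `t`, i.e. that the measure `∑ᵢ vᵢ⁴ δ_{xᵢ}` annihilates every
polynomial of degree `≤ 4`. Since `x` takes at most five values, testing against the product of
`X - c'` over all values `c' ≠ c` shows that the mass `∑_{xᵢ = c} vᵢ⁴` of each value `c` vanishes.
So no value of `x` is taken only once, and as `u` is not a multiple of `v`, at least two values are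
taken; with at most five coordinates some value is taken exactly twice, at `i` and `j`. Then
`vᵢ⁴ + vⱼ⁴ = 0`, and `ζ = vᵢ / vⱼ` satisfies `wᵢ = ζ wⱼ` on all of `W`.
-/

open Finset Polynomial Module Submodule

variable {K ι : Type*} [Field K]

lemma sum_mul_pow_eq_zero_of_forall_sum_mul_add_pow_eq_zero [CharZero K] (s : Finset ι)
    (a x : ι → K) {d : ℕ} (h : ∀ t, ∑ i ∈ s, a i * (t + x i) ^ d = 0) {k : ℕ} (hk : k ≤ d) :
    ∑ i ∈ s, a i * x i ^ k = 0 := by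
  set Q : K[X] := ∑ i ∈ s, C (a i) * (X + C (x i)) ^ d
  have hQ : Q = 0 := Polynomial.funext fun t => by simp [Q, eval_finsetSum, h t]
  have hcoeff := congrArg (coeff · (d - k)) hQ
  simp only [Q, finsetSum_coeff, coeff_C_mul, coeff_X_add_C_pow, coeff_zero,
    Nat.sub_sub_self hk, ← mul_assoc, ← Finset.sum_mul] at hcoeff
  exact (mul_eq_zero.1 hcoeff).resolve_right
    (Nat.cast_ne_zero.2 (Nat.choose_pos (Nat.sub_le d k)).ne')

lemma sum_mul_eval_eq_zero_of_sum_mul_pow_eq_zero (s : Finset ι) (a x : ι → K) {d : ℕ}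
    (h : ∀ k ≤ d, ∑ i ∈ s, a i * x i ^ k = 0) {p : K[X]} (hp : p.natDegree ≤ d) :
    ∑ i ∈ s, a i * p.eval (x i) = 0 := by
  simp_rw [eval_eq_sum_range' (Nat.lt_succ_of_le hp), Finset.mul_sum]
  rw [Finset.sum_comm]
  refine Finset.sum_eq_zero fun k hk => ?_
  simp_rw [mul_left_comm (a _), ← Finset.mul_sum, h k (Nat.lt_succ_iff.1 (mem_range.1 hk)),
    mul_zero]

lemma sum_filter_eq_zero_of_sum_mul_eval_eq_zero [DecidableEq K] (s : Finset ι) (a x : ι → K)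
    {d : ℕ} (hcard : #(s.image x) ≤ d + 1)
    (h : ∀ p : K[X], p.natDegree ≤ d → ∑ i ∈ s, a i * p.eval (x i) = 0) (c : K) :
    ∑ i ∈ s with x i = c, a i = 0 := by
  by_cases hc : c ∈ s.image x
  swap
  · refine Finset.sum_eq_zero fun i hi => absurd ?_ hc
    obtain ⟨his, rfl⟩ := mem_filter.1 hi
    exact mem_image_of_mem x his
  set p : K[X] := ∏ c' ∈ (s.image x).erase c, (X - C c')
  have hp : p.natDegree ≤ d := by
    rw [natDegree_finsetProd_X_sub_C_eq_card, card_erase_of_mem hc]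
    omega
  have hpc : p.eval c ≠ 0 := by
    simp only [p, eval_prod, eval_sub, eval_X, eval_C]
    exact prod_ne_zero_iff.2 fun c' hc' => sub_ne_zero.2 (ne_of_mem_erase hc').symm
  have hsum : ∑ i ∈ s, a i * p.eval (x i) = (∑ i ∈ s with x i = c, a i) * p.eval c := by
    rw [Finset.sum_mul, Finset.sum_filter]
    refine Finset.sum_congr rfl fun i hi => ?_
    split_ifs with hxi
    · rw [hxi]
    · simp only [p, eval_prod, eval_sub, eval_X, eval_C]
      exact mul_eq_zero_of_right _ (prod_eq_zero (mem_erase.2 ⟨hxi, mem_image_of_mem x hi⟩)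
        (sub_self _))
  rw [h p hp] at hsum
  exact (mul_eq_zero.1 hsum.symm).resolve_right hpc

lemma exists_filter_eq_pair {β : Type*} [DecidableEq ι] [DecidableEq β] (s : Finset ι) (f : ι → β)
    (hs : #s < 3 * #(s.image f)) (hsingle : ∀ i ∈ s, {j ∈ s | f j = f i} ≠ {i}) :
    ∃ y, ∃ i j, i ≠ j ∧ {k ∈ s | f k = y} = {i, j} := by
  obtain ⟨y, hy, hlt⟩ := exists_card_fiber_lt_of_card_lt_mul (f := f) (n := 3)
    (by rwa [mul_comm] at hs)
  obtain ⟨i, hi, rfl⟩ := mem_image.1 hy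
  have hmem : i ∈ {k ∈ s | f k = f i} := mem_filter.2 ⟨hi, rfl⟩
  have hne_one : #{k ∈ s | f k = f i} ≠ 1 := fun h1 => by
    obtain ⟨a, ha⟩ := card_eq_one.1 h1
    obtain rfl : i = a := mem_singleton.1 (ha ▸ hmem)
    exact hsingle i hi ha
  have hpos : 0 < #{k ∈ s | f k = f i} := card_pos.2 ⟨i, hmem⟩
  exact ⟨f i, card_eq_two.1 (by omega)⟩

lemma exists_add_mul_ne_zero [Infinite K] [Finite ι] (p q : ι → K) :
    ∃ t : K, ∀ i, p i ≠ 0 → q i + t * p i ≠ 0 := by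
  obtain ⟨t, ht⟩ := (Set.finite_range fun i => -q i / p i).exists_notMem
  refine ⟨t, fun i hp h => ht ⟨i, ?_⟩⟩
  rw [div_eq_iff hp]
  linear_combination -h

lemma exists_le_span_pair_of_finrank_eq_two [Infinite K] [Finite ι] {W : Submodule K (ι → K)}
    (hW : finrank K W = 2) :
    ∃ u ∈ W, ∃ v ∈ W, W ≤ span K {u, v} ∧ ∀ i, v i = 0 → u i = 0 := by
  let b := finBasisOfFinrankEq K W hW
  obtain ⟨t, ht⟩ := exists_add_mul_ne_zero (b 0 : ι → K) (b 1)
  refine ⟨b 0, (b 0).2, b 1 + t • b 0, add_mem (b 1).2 (smul_mem _ _ (b 0).2),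
    fun w hw => ?_, fun i h => not_not.1 fun h0 => ht i h0 h⟩
  set r := b.repr ⟨w, hw⟩
  have hr := congrArg Subtype.val (b.sum_repr ⟨w, hw⟩)
  simp only [Fin.sum_univ_two, Submodule.coe_add, Submodule.coe_smul] at hr
  rw [mem_span_pair, ← hr]
  exact ⟨r 0 - t * r 1, r 1, by module⟩

theorem exists_apply_eq_mul_apply_of_sum_pow_four_eq_zero [CharZero K] [Fintype ι]
    (hι : Fintype.card ι ≤ 5) {W : Submodule K (ι → K)} (hW : 1 < finrank K W)
    {u v : ι → K} (hu : u ∈ W) (hv : v ∈ W) (hWuv : W ≤ span K {u, v})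
    (hvu : ∀ i, v i = 0 → u i = 0) (hq : ∀ w ∈ W, ∑ i, w i ^ 4 = 0) :
    ∃ i j, i ≠ j ∧ ∃ ζ : K, ζ ^ 4 = -1 ∧ ∀ w ∈ W, w i = ζ * w j := by
  classical
  set N := univ.filter fun i => v i ≠ 0
  set x : ι → K := fun i => u i / v i
  have hux : ∀ i ∈ N, u i = x i * v i := fun i hi =>
    (div_mul_cancel₀ _ (mem_filter.1 hi).2).symm
  have hmoment : ∀ t, ∑ i ∈ N, v i ^ 4 * (t + x i) ^ 4 = 0 := by
    intro t
    have hsum := hq (t • v + u) (add_mem (smul_mem _ _ hv) hu)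
    rw [← Finset.sum_filter_of_ne (p := fun i => v i ≠ 0) fun i _ h hvi => h (by simp [hvi, hvu i hvi])] at hsum
    rw [← hsum]
    refine Finset.sum_congr rfl fun i hi => ?_
    rw [Pi.add_apply, Pi.smul_apply, smul_eq_mul, hux i hi]
    ring
  have hfiber : ∀ c, ∑ i ∈ N with x i = c, v i ^ 4 = 0 :=
    sum_filter_eq_zero_of_sum_mul_eval_eq_zero N _ x (d := 4)
      (card_image_le.trans ((card_le_univ N).trans hι)) fun _ hp =>
        sum_mul_eval_eq_zero_of_sum_mul_pow_eq_zero N _ x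
          (fun _ hk => sum_mul_pow_eq_zero_of_forall_sum_mul_add_pow_eq_zero N _ x hmoment hk) hp
  have hvalues : 1 < #(N.image x) := by
    by_contra! h
    obtain ⟨c, hc⟩ := card_le_one_iff_subset_singleton.1 h
    have huv : u = c • v := funext fun i => by
      by_cases hvi : v i = 0
      · simp [hvi, hvu i hvi]
      have hi : i ∈ N := mem_filter.2 ⟨mem_univ i, hvi⟩
      rw [Pi.smul_apply, smul_eq_mul, hux i hi, mem_singleton.1 (hc (mem_image_of_mem x hi))]
    refine hW.not_ge (finrank_le_one ⟨v, hv⟩ fun w => ?_)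
    obtain ⟨a, b, hab⟩ := mem_span_pair.1 (hWuv w.2)
    exact ⟨a * c + b, Subtype.ext (by simp [← hab, huv, add_smul, mul_smul])⟩
  obtain ⟨c, i, j, hij, hF⟩ := exists_filter_eq_pair N x
    (((card_le_univ N).trans hι).trans_lt (by omega)) fun i hi hF => by
      have := hfiber (x i)
      rw [hF, sum_singleton] at this
      exact (mem_filter.1 hi).2 (pow_eq_zero_iff four_ne_zero |>.1 this)
  have hi := mem_filter.1 (hF ▸ mem_insert_self i {j})
  have hj := mem_filter.1 (hF ▸ mem_insert_of_mem (mem_singleton_self j))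
  have hvj : v j ≠ 0 := (mem_filter.1 hj.1).2
  have hpair := hfiber c
  rw [hF, sum_pair hij] at hpair
  refine ⟨i, j, hij, v i / v j, ?_, fun w hw => ?_⟩
  · rw [div_pow, div_eq_iff (pow_ne_zero _ hvj)]
    linear_combination hpair
  obtain ⟨a, b, rfl⟩ := mem_span_pair.1 (hWuv hw)
  simp only [Pi.add_apply, Pi.smul_apply, smul_eq_mul, hux i hi.1, hux j hj.1, hi.2, hj.2]
  field_simp

/-- Every 2-dimensional linear subspace of `ℂ⁵` on which `v₀⁴ + ⋯ + v₄⁴` vanishes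
identically is contained in a hyperplane `x i = ζ x j` with `ζ⁴ = -1`. -/
theorem stmt_12 (W : Submodule ℂ (Fin 5 → ℂ)) (hW : Module.finrank ℂ W = 2)
    (hq : ∀ v ∈ W, ∑ i : Fin 5, v i ^ 4 = 0) :
    ∃ i j : Fin 5, i ≠ j ∧ ∃ ζ : ℂ, ζ ^ 4 = -1 ∧ ∀ w ∈ W, w i = ζ * w j := by
  obtain ⟨u, hu, v, hv, hWuv, hvu⟩ := exists_le_span_pair_of_finrank_eq_two hW
  exact exists_apply_eq_mul_apply_of_sum_pow_four_eq_zero (Fintype.card_fin 5).le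
    (hW ▸ one_lt_two) hu hv hWuv hvu hq
end

section
/- Let W ⊆ ℂ⁵ be a 2-dimensional linear subspace such that v_0⁴ + v_1⁴ + v_2⁴ + v_3⁴ + v_4⁴ = 0 for every v ∈ W, and let u = (u_0, ..., u_4), v = (v_0, ..., v_4) be a basis of W. Then the ℂ-linear span of the five binary cubic forms g_i(s, t) = (s·u_i + t·v_i)³, for i = 0, ..., 4, inside the space of homogeneous degree 3 polynomials in ℂ[s, t], is exactly 2-dimensional. -/
open MvPolynomial

namespace Stmt13Aux

/-- cube Veronese coordinates -/
noncomputable def nu3 (a b : ℂ) : Fin 4 → ℂ := ![a^3, 3*a^2*b, 3*a*b^2, b^3]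

lemma cross_trans (a b c d e f : ℂ) (h : ¬(a = 0 ∧ b = 0)) (h1 : a*d - b*c = 0)
    (h2 : a*f - b*e = 0) : c*f - d*e = 0 := by
  rcases not_and_or.mp h with ha | hb
  · have hh : a * (c*f - d*e) = 0 := by linear_combination c*h2 - e*h1
    exact (mul_eq_zero.mp hh).resolve_left ha
  · have hh : b * (c*f - d*e) = 0 := by linear_combination d*h2 - f*h1
    exact (mul_eq_zero.mp hh).resolve_left hb

lemma dep_scale (a b c d : ℂ) (h : ¬(a = 0 ∧ b = 0)) (hcr : a*d - b*c = 0) :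
    ∃ t : ℂ, c = t*a ∧ d = t*b := by
  rcases not_and_or.mp h with ha | hb
  · refine ⟨c/a, by field_simp, ?_⟩
    field_simp
    linear_combination hcr
  · refine ⟨d/b, ?_, by field_simp⟩
    field_simp
    linear_combination -hcr

lemma nu3_zero : nu3 0 0 = 0 := by
  funext i; fin_cases i <;> simp [nu3]

lemma nu3_smul (t a b : ℂ) : nu3 (t*a) (t*b) = t^3 • nu3 a b := by
  funext i; fin_cases i <;> (simp [nu3]; ring)

lemma nu3_li (a b c d : ℂ) (hD : a*d - b*c ≠ 0) :
    LinearIndependent ℂ ![nu3 a b, nu3 c d] := by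
  rw [linearIndependent_fin2]
  simp only [Matrix.cons_val_one, Matrix.head_cons, Matrix.cons_val_zero]
  constructor
  · intro h0
    have hc : c^3 = 0 := by simpa [nu3] using congrFun h0 0
    have hd : d^3 = 0 := by simpa [nu3] using congrFun h0 3
    have hc0 : c = 0 := by
      simpa using pow_eq_zero_iff (n := 3) (by norm_num) |>.mp hc
    have hd0 : d = 0 := by
      simpa using pow_eq_zero_iff (n := 3) (by norm_num) |>.mp hd
    exact hD (by rw [hc0, hd0]; ring)
  · intro t ht
    have e1 : t * c^3 = a^3 := by simpa [nu3] using congrFun ht 0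
    have e2 : t * (3*c^2*d) = 3*a^2*b := by simpa [nu3] using congrFun ht 1
    have e3 : t * (3*c*d^2) = 3*a*b^2 := by simpa [nu3] using congrFun ht 2
    have e4 : t * d^3 = b^3 := by simpa [nu3] using congrFun ht 3
    have k1 : a^2 * (a*d - b*c) = 0 := by linear_combination (-d)*e1 + (c/3)*e2
    have k3 : b^2 * (a*d - b*c) = 0 := by linear_combination (-d/3)*e3 + c*e4
    have ha : a = 0 := by
      have := (mul_eq_zero.mp k1).resolve_right hD
      simpa using pow_eq_zero_iff (n := 2) (by norm_num) |>.mp this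
    have hb : b = 0 := by
      have := (mul_eq_zero.mp k3).resolve_right hD
      simpa using pow_eq_zero_iff (n := 2) (by norm_num) |>.mp this
    exact hD (by rw [ha, hb]; ring)

lemma key_product (u0 v0 u1 v1 u2 v2 u3 v3 u4 v4 a1 b1 a2 b2 a3 b3 a4 b4 : ℂ)
    (hm0 : v0^4 + v1^4 + v2^4 + v3^4 + v4^4 = 0)
    (hm1 : u0*v0^3 + u1*v1^3 + u2*v2^3 + u3*v3^3 + u4*v4^3 = 0)
    (hm2 : u0^2*v0^2 + u1^2*v1^2 + u2^2*v2^2 + u3^2*v3^2 + u4^2*v4^2 = 0)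
    (hm3 : u0^3*v0 + u1^3*v1 + u2^3*v2 + u3^3*v3 + u4^3*v4 = 0)
    (hm4 : u0^4 + u1^4 + u2^4 + u3^4 + u4^4 = 0)
    (hz1 : u1*a1 + v1*b1 = 0) (hz2 : u2*a2 + v2*b2 = 0)
    (hz3 : u3*a3 + v3*b3 = 0) (hz4 : u4*a4 + v4*b4 = 0) :
    (u0*a1 + v0*b1) * (u0*a2 + v0*b2) * (u0*a3 + v0*b3) * (u0*a4 + v0*b4) = 0 := by
  linear_combination
    (a1*a2*a3*a4)*hm4
    + (a1*a2*a3*b4 + a1*a2*b3*a4 + a1*b2*a3*a4 + b1*a2*a3*a4)*hm3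
    + (a1*a2*b3*b4 + a1*b2*a3*b4 + a1*b2*b3*a4 + b1*a2*a3*b4 + b1*a2*b3*a4 + b1*b2*a3*a4)*hm2
    + (a1*b2*b3*b4 + b1*a2*b3*b4 + b1*b2*a3*b4 + b1*b2*b3*a4)*hm1
    + (b1*b2*b3*b4)*hm0
    - ((u1*a2+v1*b2)*(u1*a3+v1*b3)*(u1*a4+v1*b4))*hz1
    - ((u2*a1+v2*b1)*(u2*a3+v2*b3)*(u2*a4+v2*b4))*hz2
    - ((u3*a1+v3*b1)*(u3*a2+v3*b2)*(u3*a4+v3*b4))*hz3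
    - ((u4*a1+v4*b1)*(u4*a2+v4*b2)*(u4*a3+v4*b3))*hz4


lemma partner (u v : Fin 5 → ℂ)
    (hm0 : (v 0)^4 + (v 1)^4 + (v 2)^4 + (v 3)^4 + (v 4)^4 = 0)
    (hm1 : u 0*(v 0)^3 + u 1*(v 1)^3 + u 2*(v 2)^3 + u 3*(v 3)^3 + u 4*(v 4)^3 = 0)
    (hm2 : (u 0)^2*(v 0)^2 + (u 1)^2*(v 1)^2 + (u 2)^2*(v 2)^2 + (u 3)^2*(v 3)^2 + (u 4)^2*(v 4)^2 = 0)
    (hm3 : (u 0)^3*v 0 + (u 1)^3*v 1 + (u 2)^3*v 2 + (u 3)^3*v 3 + (u 4)^3*v 4 = 0)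
    (hm4 : (u 0)^4 + (u 1)^4 + (u 2)^4 + (u 3)^4 + (u 4)^4 = 0)
    (i : Fin 5) (hi : ¬(u i = 0 ∧ v i = 0)) :
    ∃ j, j ≠ i ∧ ¬(u j = 0 ∧ v j = 0) ∧ u i * v j - v i * u j = 0 := by
  classical
  obtain ⟨e1, e2, he⟩ : ∃ e1 e2 : ℂ, u i * e1 + v i * e2 ≠ 0 := by
    rcases not_and_or.mp hi with h | h
    · exact ⟨1, 0, by simpa using h⟩
    · exact ⟨0, 1, by simpa using h⟩
  set a : Fin 5 → ℂ := fun j => if u j = 0 ∧ v j = 0 then e1 else v j with ha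
  set b : Fin 5 → ℂ := fun j => if u j = 0 ∧ v j = 0 then e2 else -(u j) with hb
  have hz : ∀ j, u j * a j + v j * b j = 0 := by
    intro j
    by_cases h : u j = 0 ∧ v j = 0
    · simp [ha, hb, if_pos h, h.1, h.2]
    · simp only [ha, hb, if_neg h]; ring
  have hfac : ∀ j, u i * a j + v i * b j = 0 → j ≠ i →
      ∃ j', j' ≠ i ∧ ¬(u j' = 0 ∧ v j' = 0) ∧ u i * v j' - v i * u j' = 0 := by
    intro j hj hji
    by_cases h : u j = 0 ∧ v j = 0
    · exact absurd (by simpa [ha, hb, if_pos h] using hj) he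
    · refine ⟨j, hji, h, ?_⟩
      have hj' : u i * v j + v i * -(u j) = 0 := by simpa [ha, hb, if_neg h] using hj
      linear_combination hj'
  fin_cases i
  · have hp := key_product (u 0) (v 0) (u 1) (v 1) (u 2) (v 2) (u 3) (v 3) (u 4) (v 4)
      (a 1) (b 1) (a 2) (b 2) (a 3) (b 3) (a 4) (b 4)
      hm0 hm1 hm2 hm3 hm4 (hz 1) (hz 2) (hz 3) (hz 4)
    rcases mul_eq_zero.mp hp with h | h
    · rcases mul_eq_zero.mp h with h | h
      · rcases mul_eq_zero.mp h with h | h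
        · exact hfac 1 h (by decide)
        · exact hfac 2 h (by decide)
      · exact hfac 3 h (by decide)
    · exact hfac 4 h (by decide)
  · have hp := key_product (u 1) (v 1) (u 0) (v 0) (u 2) (v 2) (u 3) (v 3) (u 4) (v 4)
      (a 0) (b 0) (a 2) (b 2) (a 3) (b 3) (a 4) (b 4)
      (by linear_combination hm0) (by linear_combination hm1) (by linear_combination hm2)
      (by linear_combination hm3) (by linear_combination hm4) (hz 0) (hz 2) (hz 3) (hz 4)
    rcases mul_eq_zero.mp hp with h | h
    · rcases mul_eq_zero.mp h with h | h
      · rcases mul_eq_zero.mp h with h | h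
        · exact hfac 0 h (by decide)
        · exact hfac 2 h (by decide)
      · exact hfac 3 h (by decide)
    · exact hfac 4 h (by decide)
  · have hp := key_product (u 2) (v 2) (u 0) (v 0) (u 1) (v 1) (u 3) (v 3) (u 4) (v 4)
      (a 0) (b 0) (a 1) (b 1) (a 3) (b 3) (a 4) (b 4)
      (by linear_combination hm0) (by linear_combination hm1) (by linear_combination hm2)
      (by linear_combination hm3) (by linear_combination hm4) (hz 0) (hz 1) (hz 3) (hz 4)
    rcases mul_eq_zero.mp hp with h | h
    · rcases mul_eq_zero.mp h with h | h
      · rcases mul_eq_zero.mp h with h | h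
        · exact hfac 0 h (by decide)
        · exact hfac 1 h (by decide)
      · exact hfac 3 h (by decide)
    · exact hfac 4 h (by decide)
  · have hp := key_product (u 3) (v 3) (u 0) (v 0) (u 1) (v 1) (u 2) (v 2) (u 4) (v 4)
      (a 0) (b 0) (a 1) (b 1) (a 2) (b 2) (a 4) (b 4)
      (by linear_combination hm0) (by linear_combination hm1) (by linear_combination hm2)
      (by linear_combination hm3) (by linear_combination hm4) (hz 0) (hz 1) (hz 2) (hz 4)
    rcases mul_eq_zero.mp hp with h | h
    · rcases mul_eq_zero.mp h with h | h
      · rcases mul_eq_zero.mp h with h | h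
        · exact hfac 0 h (by decide)
        · exact hfac 1 h (by decide)
      · exact hfac 2 h (by decide)
    · exact hfac 4 h (by decide)
  · have hp := key_product (u 4) (v 4) (u 0) (v 0) (u 1) (v 1) (u 2) (v 2) (u 3) (v 3)
      (a 0) (b 0) (a 1) (b 1) (a 2) (b 2) (a 3) (b 3)
      (by linear_combination hm0) (by linear_combination hm1) (by linear_combination hm2)
      (by linear_combination hm3) (by linear_combination hm4) (hz 0) (hz 1) (hz 2) (hz 3)
    rcases mul_eq_zero.mp hp with h | h
    · rcases mul_eq_zero.mp h with h | h
      · rcases mul_eq_zero.mp h with h | h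
        · exact hfac 0 h (by decide)
        · exact hfac 1 h (by decide)
      · exact hfac 2 h (by decide)
    · exact hfac 3 h (by decide)


lemma rank_two (u v : Fin 5 → ℂ)
    (hm0 : (v 0)^4 + (v 1)^4 + (v 2)^4 + (v 3)^4 + (v 4)^4 = 0)
    (hm1 : u 0*(v 0)^3 + u 1*(v 1)^3 + u 2*(v 2)^3 + u 3*(v 3)^3 + u 4*(v 4)^3 = 0)
    (hm2 : (u 0)^2*(v 0)^2 + (u 1)^2*(v 1)^2 + (u 2)^2*(v 2)^2 + (u 3)^2*(v 3)^2 + (u 4)^2*(v 4)^2 = 0)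
    (hm3 : (u 0)^3*v 0 + (u 1)^3*v 1 + (u 2)^3*v 2 + (u 3)^3*v 3 + (u 4)^3*v 4 = 0)
    (hm4 : (u 0)^4 + (u 1)^4 + (u 2)^4 + (u 3)^4 + (u 4)^4 = 0)
    (hli : LinearIndependent ℂ ![u, v]) :
    Module.finrank ℂ
      (Submodule.span ℂ (Set.range fun i : Fin 5 => nu3 (u i) (v i))) = 2 := by
  -- symmetry and transitivity helpers for the cross products
  have hsym : ∀ x y : Fin 5, u x * v y - v x * u y = 0 → u y * v x - v y * u x = 0 := by
    intro x y h; linear_combination -h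
  have htrans : ∀ p q r : Fin 5, ¬(u p = 0 ∧ v p = 0) →
      u p * v q - v p * u q = 0 → u p * v r - v p * u r = 0 →
      u q * v r - v q * u r = 0 := by
    intro p q r hp h1 h2
    exact cross_trans (u p) (v p) (u q) (v q) (u r) (v r) hp h1 h2
  -- there are two indices with nonproportional points
  have hex : ∃ k l : Fin 5, u k * v l - v k * u l ≠ 0 := by
    by_contra hc
    push_neg at hc
    rw [linearIndependent_fin2] at hli
    simp only [Matrix.cons_val_one, Matrix.head_cons, Matrix.cons_val_zero] at hli
    obtain ⟨hv0, hmain⟩ := hli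
    obtain ⟨j0, hj0⟩ : ∃ j, v j ≠ 0 := by
      by_contra hall; push_neg at hall
      exact hv0 (funext fun j => hall j)
    apply hmain (u j0 / v j0)
    funext i
    have h := hc i j0
    show u j0 / v j0 * v i = u i
    field_simp
    linear_combination -h
  obtain ⟨k, l, hkl⟩ := hex
  have hk0 : ¬(u k = 0 ∧ v k = 0) := by
    rintro ⟨h1, h2⟩; exact hkl (by rw [h1, h2]; ring)
  have hl0 : ¬(u l = 0 ∧ v l = 0) := by
    rintro ⟨h1, h2⟩; exact hkl (by rw [h1, h2]; ring)
  -- every point is proportional to point k or point l (or zero)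
  have cover : ∀ m : Fin 5, (u m = 0 ∧ v m = 0) ∨
      (u k * v m - v k * u m = 0) ∨ (u l * v m - v l * u m = 0) := by
    intro m
    by_contra hcon
    push_neg at hcon
    obtain ⟨hmz', hmk, hml⟩ := hcon
    have hmz : ¬(u m = 0 ∧ v m = 0) := fun h => hmz' h.1 h.2
    obtain ⟨m', hm'ne, hm'nz, hm'cr⟩ := partner u v hm0 hm1 hm2 hm3 hm4 m hmz
    obtain ⟨k', hk'ne, hk'nz, hk'cr⟩ := partner u v hm0 hm1 hm2 hm3 hm4 k hk0
    obtain ⟨l', hl'ne, hl'nz, hl'cr⟩ := partner u v hm0 hm1 hm2 hm3 hm4 l hl0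
    -- the six indices m, m', k, k', l, l' are pairwise distinct
    have n12 : m ≠ m' := hm'ne.symm
    have n13 : m ≠ k := fun h => hmk (by rw [h]; ring)
    have n15 : m ≠ l := fun h => hml (by rw [h]; ring)
    have n14 : m ≠ k' := fun h => hmk (hsym m k (by rw [h]; exact hsym k k' hk'cr))
    have n16 : m ≠ l' := fun h => hml (hsym m l (by rw [h]; exact hsym l l' hl'cr))
    have n23 : m' ≠ k := fun h => hmk (hsym m k (by rw [← h]; exact hm'cr))
    have n25 : m' ≠ l := fun h => hml (hsym m l (by rw [← h]; exact hm'cr))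
    have n24 : m' ≠ k' := by
      intro h
      apply hmk
      apply hsym m k
      refine htrans m' m k hm'nz (hsym m m' hm'cr) ?_
      rw [← h] at hk'cr
      exact hsym k m' hk'cr
    have n26 : m' ≠ l' := by
      intro h
      apply hml
      apply hsym m l
      refine htrans m' m l hm'nz (hsym m m' hm'cr) ?_
      rw [← h] at hl'cr
      exact hsym l m' hl'cr
    have n34 : k ≠ k' := hk'ne.symm
    have n35 : k ≠ l := fun h => hkl (by rw [h]; ring)
    have n36 : k ≠ l' := fun h => hkl (hsym l k (by rw [h]; exact hl'cr))
    have n45 : k' ≠ l := fun h => hkl (by rw [← h]; exact hk'cr)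
    have n46 : k' ≠ l' := by
      intro h
      apply hkl
      refine htrans k' k l hk'nz (hsym k k' hk'cr) ?_
      rw [← h] at hl'cr
      exact hsym l k' hl'cr
    have n56 : l ≠ l' := hl'ne.symm
    have h6 : ({m, m', k, k', l, l'} : Finset (Fin 5)).card = 6 := by
      rw [Finset.card_insert_of_notMem (by simp [n12, n13, n14, n15, n16]),
          Finset.card_insert_of_notMem (by simp [n23, n24, n25, n26]),
          Finset.card_insert_of_notMem (by simp [n34, n35, n36]),
          Finset.card_insert_of_notMem (by simp [n45, n46]),
          Finset.card_insert_of_notMem (by simp [n56]),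
          Finset.card_singleton]
    have h7 := Finset.card_le_univ ({m, m', k, k', l, l'} : Finset (Fin 5))
    rw [h6] at h7
    simp at h7
  -- conclude: span equals span of the two cubes
  have hxy_li : LinearIndependent ℂ ![nu3 (u k) (v k), nu3 (u l) (v l)] :=
    nu3_li _ _ _ _ hkl
  have hspan_eq : Submodule.span ℂ (Set.range fun i : Fin 5 => nu3 (u i) (v i)) =
      Submodule.span ℂ (Set.range ![nu3 (u k) (v k), nu3 (u l) (v l)]) := by
    apply le_antisymm
    · rw [Submodule.span_le]
      rintro _ ⟨m, rfl⟩
      show nu3 (u m) (v m) ∈ _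
      rcases cover m with h | h | h
      · rw [h.1, h.2, nu3_zero]
        exact Submodule.zero_mem _
      · obtain ⟨t, ht1, ht2⟩ := dep_scale (u k) (v k) (u m) (v m) hk0 h
        rw [ht1, ht2, nu3_smul]
        exact Submodule.smul_mem _ _ (Submodule.subset_span ⟨0, rfl⟩)
      · obtain ⟨t, ht1, ht2⟩ := dep_scale (u l) (v l) (u m) (v m) hl0 h
        rw [ht1, ht2, nu3_smul]
        exact Submodule.smul_mem _ _ (Submodule.subset_span ⟨1, rfl⟩)
    · rw [Submodule.span_le]
      rintro _ ⟨i, rfl⟩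
      fin_cases i
      · exact Submodule.subset_span ⟨k, rfl⟩
      · exact Submodule.subset_span ⟨l, rfl⟩
  rw [hspan_eq, finrank_span_eq_card hxy_li, Fintype.card_fin]


noncomputable def mon : Fin 4 → MvPolynomial (Fin 2) ℂ :=
  ![X 0 ^ 3, X 0 ^ 2 * X 1, X 0 * X 1 ^ 2, X 1 ^ 3]

noncomputable def psi : (Fin 4 → ℂ) →ₗ[ℂ] MvPolynomial (Fin 2) ℂ :=
  LinearMap.lsum ℂ (fun _ : Fin 4 => ℂ) ℂ (fun a => LinearMap.toSpanSingleton ℂ _ (mon a))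

lemma psi_apply (c : Fin 4 → ℂ) :
    psi c = c 0 • mon 0 + c 1 • mon 1 + c 2 • mon 2 + c 3 • mon 3 := by
  simp [psi, LinearMap.lsum_apply, Fin.sum_univ_four, LinearMap.toSpanSingleton_apply]

lemma psi_inj : Function.Injective psi := by
  have key : ∀ c : Fin 4 → ℂ, psi c = 0 → c = 0 := by
    intro c hc
    have hev : ∀ s t : ℂ,
        c 0 * s^3 + c 1 * (s^2*t) + c 2 * (s*t^2) + c 3 * t^3 = 0 := by
      intro s t
      have h := congrArg (eval ![s, t]) hc
      rw [psi_apply] at h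
      simp only [mon, Matrix.cons_val_zero, Matrix.cons_val_one, Matrix.head_cons,
        Matrix.cons_val_two, Matrix.tail_cons, Matrix.cons_val_three,
        smul_eq_C_mul, map_add, map_mul, map_pow, eval_C, eval_X, map_zero] at h
      linear_combination h
    funext a
    fin_cases a
    · show c 0 = 0
      linear_combination hev 1 0
    · show c 1 = 0
      linear_combination 2*hev 1 1 - (1/2)*hev 1 2 - (3/2)*hev 1 0 + 2*hev 0 1
    · show c 2 = 0
      linear_combination -hev 1 1 + (1/2)*hev 1 2 + (1/2)*hev 1 0 - 3*hev 0 1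
    · show c 3 = 0
      linear_combination hev 0 1
  intro c d h
  have := key (c - d) (by rw [map_sub, h, sub_self])
  exact sub_eq_zero.mp this

lemma expand_cube (a b : ℂ) :
    (C a * X (0 : Fin 2) + C b * X 1) ^ 3 = psi (nu3 a b) := by
  rw [psi_apply]
  simp only [nu3, mon, Matrix.cons_val_zero, Matrix.cons_val_one, Matrix.head_cons,
    Matrix.cons_val_two, Matrix.tail_cons, Matrix.cons_val_three,
    smul_eq_C_mul, C_mul, C_pow, map_ofNat]
  ring


end Stmt13Aux

open Stmt13Aux in
/-- If `W ⊆ ℂ⁵` is a 2-dimensional subspace on which `v₀⁴ + ⋯ + v₄⁴` vanishes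
identically, and `u, v` is a basis of `W`, then the span of the five binary cubics
`(s·uᵢ + t·vᵢ)³` is exactly 2-dimensional. -/
theorem stmt_13 (W : Submodule ℂ (Fin 5 → ℂ)) (hW : Module.finrank ℂ W = 2)
    (hq : ∀ w ∈ W, ∑ i : Fin 5, w i ^ 4 = 0)
    (u v : Fin 5 → ℂ) (hu : u ∈ W) (hv : v ∈ W)
    (hli : LinearIndependent ℂ ![u, v]) (hspan : Submodule.span ℂ {u, v} = W) :
    Module.finrank ℂ
      (Submodule.span ℂ (Set.range fun i : Fin 5 =>
        (C (u i) * X (0 : Fin 2) + C (v i) * X (1 : Fin 2)) ^ 3)) = 2 := by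
  have hmem : ∀ s t : ℂ, (s • u + t • v) ∈ W := fun s t =>
    W.add_mem (W.smul_mem _ hu) (W.smul_mem _ hv)
  have hE : ∀ s t : ℂ,
      (s*u 0 + t*v 0)^4 + (s*u 1 + t*v 1)^4 + (s*u 2 + t*v 2)^4
        + (s*u 3 + t*v 3)^4 + (s*u 4 + t*v 4)^4 = 0 := by
    intro s t
    have h := hq _ (hmem s t)
    simp only [Fin.sum_univ_five, Pi.add_apply, Pi.smul_apply, smul_eq_mul] at h
    linear_combination h
  have hm4 : (u 0)^4 + (u 1)^4 + (u 2)^4 + (u 3)^4 + (u 4)^4 = 0 := by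
    linear_combination hE 1 0
  have hm0 : (v 0)^4 + (v 1)^4 + (v 2)^4 + (v 3)^4 + (v 4)^4 = 0 := by
    linear_combination hE 0 1
  have hm3 : (u 0)^3*v 0 + (u 1)^3*v 1 + (u 2)^3*v 2 + (u 3)^3*v 3 + (u 4)^3*v 4 = 0 := by
    linear_combination (1/4)*hE 1 1 - (1/12)*hE 1 (-1) - (1/24)*hE 1 2
      - (1/8)*hE 1 0 + (1/2)*hE 0 1
  have hm2 : (u 0)^2*(v 0)^2 + (u 1)^2*(v 1)^2 + (u 2)^2*(v 2)^2
      + (u 3)^2*(v 3)^2 + (u 4)^2*(v 4)^2 = 0 := by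
    linear_combination (1/12)*hE 1 1 + (1/12)*hE 1 (-1) - (1/6)*hE 1 0 - (1/6)*hE 0 1
  have hm1 : u 0*(v 0)^3 + u 1*(v 1)^3 + u 2*(v 2)^3 + u 3*(v 3)^3 + u 4*(v 4)^3 = 0 := by
    linear_combination (-1/8)*hE 1 1 - (1/24)*hE 1 (-1) + (1/24)*hE 1 2
      + (1/8)*hE 1 0 - (1/2)*hE 0 1
  have hrange : (Set.range fun i : Fin 5 =>
      (C (u i) * X (0 : Fin 2) + C (v i) * X (1 : Fin 2)) ^ 3)
      = ⇑psi '' (Set.range fun i : Fin 5 => nu3 (u i) (v i)) := by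
    rw [← Set.range_comp]
    exact congrArg Set.range (funext fun i => expand_cube (u i) (v i))
  rw [hrange, ← Submodule.map_span,
    ← LinearEquiv.finrank_eq (Submodule.equivMapOfInjective psi psi_inj
      (Submodule.span ℂ (Set.range fun i : Fin 5 => nu3 (u i) (v i))))]
  exact rank_two u v hm0 hm1 hm2 hm3 hm4 hli
end
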